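/- For every even integer p ≥ 0 and every even integer q ≥ 2 there exists a constant c > 0, independent of n, k₁ and k₂, such that for all integers n ≥ 1 and all 1 ≤ k₁, k₂ ≤ n one has E(k₁ + p/2, k₂ + q/2 − 1) ≤ c · √n · 2^{k₁ + k₂} · Γ(k₂ + q/2 − 3/2) · Γ(k₁ + p/2 − 1/2). -/

import Mathlib

/-- `E(j,k) = (k-1)! 2^{k-1} ∑_{i=0}^{k-1} Γ(i+j-1/2)/(2^i i!)`. -/
noncomputable def Efun (j k : ℕ) : ℝ :=
  ((k - 1).factorial : ℝ) * 2 ^ (k - 1) *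
    ∑ i ∈ Finset.range k, Real.Gamma ((i : ℝ) + (j : ℝ) - 1 / 2) / (2 ^ i * (i.factorial : ℝ))

/-!
Writing `Γ(i + a)` as an integral, the sum `∑_{i<k} Γ(i + a) / (2^i i!)` is at most
`∫ x^{a-1} e^{-x} e^{x/2} dx = 2^a Γ(a)`. The prefactor `(k-1)! = Γ(k)` is at most `√k Γ(k - 1/2)`
by log-convexity of `Γ` between `k - 1/2` and `k + 1/2`, and `√k ≤ √(q/2) √n` because
`k = k₂ + q/2 - 1 ≤ (q/2) n`.
-/

open MeasureTheory Set Real Nat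

lemma sum_exp_neg_mul_rpow_div_le {x : ℝ} (hx : 0 < x) (a : ℝ) (k : ℕ) :
    ∑ i ∈ Finset.range k, exp (-x) * x ^ ((i : ℝ) + a - 1) / (2 ^ i * i !) ≤
      x ^ (a - 1) * exp (-(1 / 2 * x)) := by
  have hterm (i : ℕ) : exp (-x) * x ^ ((i : ℝ) + a - 1) / (2 ^ i * i !) =
      x ^ (a - 1) * exp (-x) * ((x / 2) ^ i / i !) := by
    rw [add_sub_assoc, rpow_add hx, rpow_natCast, div_pow]
    field_simp
  calc ∑ i ∈ Finset.range k, exp (-x) * x ^ ((i : ℝ) + a - 1) / (2 ^ i * i !)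
      = x ^ (a - 1) * exp (-x) * ∑ i ∈ Finset.range k, (x / 2) ^ i / i ! := by
        simp_rw [hterm, Finset.mul_sum]
    _ ≤ x ^ (a - 1) * exp (-x) * exp (x / 2) := by
        gcongr
        exact sum_le_exp_of_nonneg (by positivity) k
    _ = x ^ (a - 1) * exp (-(1 / 2 * x)) := by
        rw [mul_assoc, ← exp_add]
        ring_nf

theorem sum_Gamma_add_div_two_pow_mul_factorial_le {a : ℝ} (ha : 0 < a) (k : ℕ) :
    ∑ i ∈ Finset.range k, Gamma (i + a) / (2 ^ i * i !) ≤ 2 ^ a * Gamma a := by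
  have hint (i : ℕ) : IntegrableOn
      (fun x => exp (-x) * x ^ ((i : ℝ) + a - 1) / (2 ^ i * i !)) (Ioi 0) :=
    (GammaIntegral_convergent (by positivity)).div_const _
  have hdom : IntegrableOn (fun x : ℝ => x ^ (a - 1) * exp (-(1 / 2 * x))) (Ioi 0) := by
    refine (integrableOn_rpow_mul_exp_neg_mul_rpow (s := a - 1) (p := 1) (by linarith) one_pos
      (by norm_num : (0 : ℝ) < 1 / 2)).congr_fun (fun x _ => ?_) measurableSet_Ioi
    simp only [rpow_one, neg_mul]
  calc ∑ i ∈ Finset.range k, Gamma (i + a) / (2 ^ i * i !)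
      = ∫ x in Ioi 0, ∑ i ∈ Finset.range k,
          exp (-x) * x ^ ((i : ℝ) + a - 1) / (2 ^ i * i !) := by
        rw [integral_finsetSum _ fun i _ => hint i]
        refine Finset.sum_congr rfl fun i _ => ?_
        rw [Gamma_eq_integral (by positivity), integral_div]
    _ ≤ ∫ x in Ioi 0, x ^ (a - 1) * exp (-(1 / 2 * x)) :=
        setIntegral_mono_on (integrable_finsetSum _ fun i _ => hint i) hdom measurableSet_Ioi
          fun x hx => sum_exp_neg_mul_rpow_div_le hx a k
    _ = 2 ^ a * Gamma a := by
        rw [integral_rpow_mul_exp_neg_mul_Ioi ha (by norm_num)]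
        norm_num

theorem Gamma_add_half_le_Gamma_mul_sqrt {x : ℝ} (hx : 0 < x) :
    Gamma (x + 1 / 2) ≤ Gamma x * √x := by
  have hΓ : 0 ≤ Gamma x := (Gamma_pos_of_pos hx).le
  calc Gamma (x + 1 / 2) = Gamma (1 / 2 * x + 1 / 2 * (x + 1)) := by ring_nf
    _ ≤ Gamma x ^ (1 / 2 : ℝ) * Gamma (x + 1) ^ (1 / 2 : ℝ) :=
        Gamma_mul_add_mul_le_rpow_Gamma_mul_rpow_Gamma hx (by positivity) (by norm_num)
          (by norm_num) (by norm_num)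
    _ = Gamma x * √x := by
        rw [Gamma_add_one hx.ne', ← sqrt_eq_rpow, ← sqrt_eq_rpow, sqrt_mul hx.le,
          mul_left_comm, mul_self_sqrt hΓ, mul_comm]

lemma Gamma_nat_sub_half_pos {k : ℕ} (hk : 1 ≤ k) : 0 < Gamma (k - 1 / 2) := by
  have : (1 : ℝ) ≤ k := by exact_mod_cast hk
  exact Gamma_pos_of_pos (by linarith)

lemma factorial_pred_le_Gamma_sub_half_mul_sqrt {k : ℕ} (hk : 1 ≤ k) :
    ((k - 1)! : ℝ) ≤ Gamma (k - 1 / 2) * √k := by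
  have hk' : (1 : ℝ) ≤ k := by exact_mod_cast hk
  have hΓ := Gamma_nat_sub_half_pos hk
  calc ((k - 1)! : ℝ) = Gamma ((k - 1 / 2) + 1 / 2) := by
        rw [← Gamma_nat_eq_factorial, Nat.cast_sub hk]
        ring_nf
    _ ≤ Gamma (k - 1 / 2) * √(k - 1 / 2) := Gamma_add_half_le_Gamma_mul_sqrt (by linarith)
    _ ≤ Gamma (k - 1 / 2) * √k := by gcongr; linarith

lemma sum_Gamma_nat_add_sub_half_le {j : ℕ} (hj : 1 ≤ j) (k : ℕ) :
    ∑ i ∈ Finset.range k, Gamma ((i : ℝ) + j - 1 / 2) / (2 ^ i * i !) ≤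
      2 ^ j * Gamma (j - 1 / 2) := by
  have hj' : (1 : ℝ) ≤ j := by exact_mod_cast hj
  have hΓ := Gamma_nat_sub_half_pos hj
  calc ∑ i ∈ Finset.range k, Gamma ((i : ℝ) + j - 1 / 2) / (2 ^ i * i !)
      = ∑ i ∈ Finset.range k, Gamma (i + (j - 1 / 2)) / (2 ^ i * i !) := by
        simp_rw [add_sub_assoc]
    _ ≤ 2 ^ ((j : ℝ) - 1 / 2) * Gamma (j - 1 / 2) :=
        sum_Gamma_add_div_two_pow_mul_factorial_le (by linarith) k
    _ ≤ 2 ^ j * Gamma (j - 1 / 2) := by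
        gcongr
        rw [← rpow_natCast]
        exact rpow_le_rpow_of_exponent_le one_le_two (by linarith)

theorem Efun_le {j k : ℕ} (hj : 1 ≤ j) (hk : 1 ≤ k) :
    Efun j k ≤ 2 ^ (j + k) * √k * Gamma (k - 1 / 2) * Gamma (j - 1 / 2) := by
  have hj' : (1 : ℝ) ≤ j := by exact_mod_cast hj
  have hΓ₁ := Gamma_nat_sub_half_pos hk
  have hΓ₂ := Gamma_nat_sub_half_pos hj
  have hpow : (2 : ℝ) ^ (k - 1) ≤ 2 ^ k := pow_le_pow_right₀ one_le_two (Nat.sub_le k 1)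
  have hsum_nonneg : 0 ≤ ∑ i ∈ Finset.range k, Gamma ((i : ℝ) + j - 1 / 2) / (2 ^ i * i !) :=
    Finset.sum_nonneg fun i _ =>
      div_nonneg (Gamma_nonneg_of_nonneg (by linarith [i.cast_nonneg (α := ℝ)])) (by positivity)
  calc Efun j k ≤ (Gamma (k - 1 / 2) * √k) * 2 ^ k * (2 ^ j * Gamma (j - 1 / 2)) := by
        unfold Efun
        gcongr
        · exact factorial_pred_le_Gamma_sub_half_mul_sqrt hk
        · exact sum_Gamma_nat_add_sub_half_le hj k
    _ = 2 ^ (j + k) * √k * Gamma (k - 1 / 2) * Gamma (j - 1 / 2) := by ring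

lemma sqrt_cast_add_sub_one_le {k m n : ℕ} (hm : 1 ≤ m) (hn : 1 ≤ n) (hk : k ≤ n) :
    √((k + m - 1 : ℕ) : ℝ) ≤ √m * √n := by
  have hm' : (1 : ℝ) ≤ m := by exact_mod_cast hm
  have hn' : (1 : ℝ) ≤ n := by exact_mod_cast hn
  have hk' : (k : ℝ) ≤ n := by exact_mod_cast hk
  rw [← sqrt_mul m.cast_nonneg, Nat.cast_sub (by omega), Nat.cast_add, Nat.cast_one]
  gcongr
  nlinarith

/-- Uniform bound on the error term `E(k₁+p/2, k₂+q/2-1)`. -/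
theorem Efun_bound (p q : ℕ) (hp : Even p) (hq : Even q) (hq2 : 2 ≤ q) :
    ∃ c : ℝ, 0 < c ∧ ∀ n : ℕ, 1 ≤ n → ∀ k₁ k₂ : ℕ,
      1 ≤ k₁ → k₁ ≤ n → 1 ≤ k₂ → k₂ ≤ n →
      Efun (k₁ + p / 2) (k₂ + q / 2 - 1) ≤
        c * Real.sqrt n * 2 ^ (k₁ + k₂) *
          Real.Gamma ((k₂ : ℝ) + (q : ℝ) / 2 - 3 / 2) *
          Real.Gamma ((k₁ : ℝ) + (p : ℝ) / 2 - 1 / 2) := by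
  obtain ⟨l, rfl⟩ := hp
  obtain ⟨m, rfl⟩ := hq
  have hm : 1 ≤ m := by omega
  refine ⟨2 ^ (l + m) * √m, by positivity, fun n hn k₁ k₂ hk₁ hk₁n hk₂ hk₂n => ?_⟩
  rw [show (l + l) / 2 = l by omega, show (m + m) / 2 = m by omega]
  have hK : ((k₂ + m - 1 : ℕ) : ℝ) = k₂ + m - 1 := by
    rw [Nat.cast_sub (by omega), Nat.cast_add, Nat.cast_one]
  have hsqrt := sqrt_cast_add_sub_one_le hm hn hk₂n
  have hpow : (2 : ℝ) ^ (k₁ + l + (k₂ + m - 1)) ≤ 2 ^ (l + m) * 2 ^ (k₁ + k₂) := by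
    rw [← pow_add]
    exact pow_le_pow_right₀ one_le_two (by omega)
  have hΓ₁ := Gamma_nat_sub_half_pos (k := k₂ + m - 1) (by omega)
  have hΓ₂ := Gamma_nat_sub_half_pos (k := k₁ + l) (by omega)
  calc Efun (k₁ + l) (k₂ + m - 1)
      ≤ 2 ^ (k₁ + l + (k₂ + m - 1)) * √((k₂ + m - 1 : ℕ) : ℝ) *
          Gamma ((k₂ + m - 1 : ℕ) - 1 / 2) * Gamma ((k₁ + l : ℕ) - 1 / 2) :=
        Efun_le (by omega) (by omega)
    _ ≤ 2 ^ (l + m) * 2 ^ (k₁ + k₂) * (√m * √n) *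
          Gamma ((k₂ + m - 1 : ℕ) - 1 / 2) * Gamma ((k₁ + l : ℕ) - 1 / 2) := by
        gcongr
    _ = _ := by
        rw [hK]
        push_cast
        ring_nf
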